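/- arXiv:2509.09026 — 4 statements merged into one kernel-verified Lean document; each statement's English description precedes it below -/
import Mathlib

section
/- Let $\omega_1, \omega_2 : (0,\infty) \to (0,\infty)$ be differentiable increasing functions with $\frac{\omega_1'}{\omega_1} \le \frac{\omega_2'}{\omega_2}$ pointwise, and let $b : (0,\infty)^2 \to [0,\infty)$ be measurable. Then $\limsup_{y\to\infty} \frac{1}{\omega_1(y)}\int_0^y b(x,y)\,\omega_1(x)\,dx \ge \limsup_{y\to\infty} \frac{1}{\omega_2(y)}\int_0^y b(x,y)\,\omega_2(x)\,dx$. In particular, if the left-hand limsup is strictly less than 1, so is the right-hand one. -/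
open MeasureTheory Set Filter

theorem log_derivative_limsup_comparison
    (ω₁ ω₂ : ℝ → ℝ)
    (hpos₁ : ∀ x > 0, 0 < ω₁ x) (hpos₂ : ∀ x > 0, 0 < ω₂ x)
    (hdiff₁ : ∀ x > 0, DifferentiableAt ℝ ω₁ x)
    (hdiff₂ : ∀ x > 0, DifferentiableAt ℝ ω₂ x)
    (hmono₁ : StrictMonoOn ω₁ (Ioi 0)) (hmono₂ : StrictMonoOn ω₂ (Ioi 0))
    (hlog : ∀ x > 0, deriv ω₁ x / ω₁ x ≤ deriv ω₂ x / ω₂ x)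
    (b : ℝ → ℝ → ℝ) (hbmeas : Measurable (Function.uncurry b))
    (hbnonneg : ∀ x y, 0 < x → 0 < y → 0 ≤ b x y)
    (hint₁ : ∀ y > 0, IntegrableOn (fun x => b x y * ω₁ x) (Ioc 0 y))
    (hint₂ : ∀ y > 0, IntegrableOn (fun x => b x y * ω₂ x) (Ioc 0 y)) :
    (limsup (fun y => (((1 / ω₂ y) * ∫ x in Ioc 0 y, b x y * ω₂ x : ℝ) : EReal)) atTop ≤
      limsup (fun y => (((1 / ω₁ y) * ∫ x in Ioc 0 y, b x y * ω₁ x : ℝ) : EReal)) atTop) ∧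
    (limsup (fun y => (((1 / ω₁ y) * ∫ x in Ioc 0 y, b x y * ω₁ x : ℝ) : EReal)) atTop < 1 →
      limsup (fun y => (((1 / ω₂ y) * ∫ x in Ioc 0 y, b x y * ω₂ x : ℝ) : EReal)) atTop < 1) := by
  -- the quotient ω₂ / ω₁ is monotone on (0,∞)
  have hratio : MonotoneOn (fun x => ω₂ x / ω₁ x) (Ioi 0) := by
    have hconv : Convex ℝ (Ioi (0:ℝ)) := convex_Ioi 0
    have hdiff : ∀ x ∈ interior (Ioi (0:ℝ)), DifferentiableAt ℝ (fun x => ω₂ x / ω₁ x) x := by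
      intro x hx
      rw [interior_Ioi] at hx
      exact (hdiff₂ x hx).div (hdiff₁ x hx) (hpos₁ x hx).ne'
    apply monotoneOn_of_deriv_nonneg hconv
    · intro x hx
      exact ((hdiff x (by rwa [interior_Ioi])).continuousAt).continuousWithinAt
    · intro x hx
      exact (hdiff x hx).differentiableWithinAt
    · intro x hx
      rw [interior_Ioi] at hx
      have h1 := hpos₁ x hx
      have h2 := hpos₂ x hx
      rw [show deriv (fun x => ω₂ x / ω₁ x) x = deriv (ω₂ / ω₁) x from rfl, deriv_div (hdiff₂ x hx) (hdiff₁ x hx) h1.ne']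
      have key : deriv ω₁ x * ω₂ x ≤ deriv ω₂ x * ω₁ x := by
        have := hlog x hx
        rw [div_le_div_iff₀ h1 h2] at this
        linarith
      apply div_nonneg (by linarith) (by positivity)
  -- pointwise comparison of the two quantities for y > 0
  have hpt : ∀ y > 0, (1 / ω₂ y) * ∫ x in Ioc 0 y, b x y * ω₂ x ≤
      (1 / ω₁ y) * ∫ x in Ioc 0 y, b x y * ω₁ x := by
    intro y hy
    have h1y := hpos₁ y hy
    have h2y := hpos₂ y hy
    have hineq : ∫ x in Ioc 0 y, b x y * ω₂ x ≤
        ∫ x in Ioc 0 y, (ω₂ y / ω₁ y) * (b x y * ω₁ x) := by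
      apply setIntegral_mono_on (hint₂ y hy) ((hint₁ y hy).const_mul _) measurableSet_Ioc
      intro x hx
      have hx0 : 0 < x := hx.1
      have h1x := hpos₁ x hx0
      have h2x := hpos₂ x hx0
      have hr : ω₂ x / ω₁ x ≤ ω₂ y / ω₁ y := hratio hx0 hy hx.2
      have hb := hbnonneg x y hx0 hy
      have : ω₂ x ≤ (ω₂ y / ω₁ y) * ω₁ x := by
        rw [div_le_div_iff₀ h1x h1y] at hr
        rw [div_mul_eq_mul_div, le_div_iff₀ h1y]
        linarith
      calc b x y * ω₂ x ≤ b x y * ((ω₂ y / ω₁ y) * ω₁ x) :=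
            mul_le_mul_of_nonneg_left this hb
        _ = (ω₂ y / ω₁ y) * (b x y * ω₁ x) := by ring
    rw [integral_const_mul] at hineq
    calc (1 / ω₂ y) * ∫ x in Ioc 0 y, b x y * ω₂ x
        ≤ (1 / ω₂ y) * ((ω₂ y / ω₁ y) * ∫ x in Ioc 0 y, b x y * ω₁ x) := by
          apply mul_le_mul_of_nonneg_left hineq (by positivity)
      _ = (1 / ω₁ y) * ∫ x in Ioc 0 y, b x y * ω₁ x := by field_simp
  have hev : (fun y => (((1 / ω₂ y) * ∫ x in Ioc 0 y, b x y * ω₂ x : ℝ) : EReal)) ≤ᶠ[atTop]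
      (fun y => (((1 / ω₁ y) * ∫ x in Ioc 0 y, b x y * ω₁ x : ℝ) : EReal)) := by
    filter_upwards [eventually_gt_atTop (0:ℝ)] with y hy
    exact_mod_cast hpt y hy
  have hle := limsup_le_limsup hev
  exact ⟨hle, fun h => lt_of_le_of_lt hle h⟩
end

section
/- Suppose $b : (0,\infty)^2 \to [0,\infty)$ is measurable and satisfies: (1) $\int_0^y b(x,y)\,x\,dx \le y$ for all $y > 0$; (2) there exist $\delta_1 > 0$ and $d > 1$ with $\int_0^{\delta_1} b(x,y)\,dx \le d^y$ for all sufficiently large $y$; (3) there exist $\delta_2 > 0$ and $b_m > 0$ with $b(x,y) \le b_m$ for $x \in [y-\delta_2, y]$ and sufficiently large $y$. Then there exists $c > 1$ such that $\limsup_{y\to\infty} \frac{1}{c^y} \int_0^y b(x,y)\,c^x\,dx < 1$. -/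
open MeasureTheory Set Filter

set_option maxHeartbeats 2000000 in
theorem exists_exponential_weight
    (b : ℝ → ℝ → ℝ) (hbmeas : Measurable (Function.uncurry b))
    (hbnonneg : ∀ x y, 0 < x → 0 < y → 0 ≤ b x y)
    (hmass : ∀ y > 0, ∫ x in Ioc 0 y, b x y * x ≤ y)
    (δ₁ : ℝ) (hδ₁ : 0 < δ₁) (d : ℝ) (hd : 1 < d)
    (hsmall : ∀ᶠ y in atTop, ∫ x in Ioc 0 δ₁, b x y ≤ d ^ y)
    (δ₂ : ℝ) (hδ₂ : 0 < δ₂) (bm : ℝ) (hbm : 0 < bm)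
    (hlarge : ∀ᶠ y in atTop, ∀ x ∈ Icc (y - δ₂) y, b x y ≤ bm) :
    ∃ c > 1, limsup
      (fun y => (((1 / c ^ y) * ∫ x in Ioc 0 y, b x y * c ^ x : ℝ) : EReal)) atTop < 1 := by
  -- choose δ and c
  obtain ⟨δ, hδpos, hδle₂, hδbm⟩ : ∃ δ : ℝ, 0 < δ ∧ δ ≤ δ₂ ∧ δ * bm ≤ 1 / 4 := by
    refine ⟨min δ₂ (1 / (4 * bm)), lt_min hδ₂ (by positivity), min_le_left _ _, ?_⟩
    have h1 : min δ₂ (1 / (4 * bm)) ≤ 1 / (4 * bm) := min_le_right _ _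
    have h2 : (1 / (4 * bm)) * bm = 1 / 4 := by field_simp
    nlinarith
  obtain ⟨c, hc1, hcd, hlogc, hc8⟩ :
      ∃ c : ℝ, 1 < c ∧ d < c ∧ 1 / δ₁ < Real.log c ∧ (8 : ℝ) ≤ c ^ δ := by
    have h8pos : (0 : ℝ) < (8 : ℝ) ^ (1 / δ) := Real.rpow_pos_of_pos (by norm_num) _
    have hepos : (0 : ℝ) < Real.exp (1 / δ₁) := Real.exp_pos _
    refine ⟨d + Real.exp (1 / δ₁) + (8 : ℝ) ^ (1 / δ), by nlinarith, by nlinarith, ?_, ?_⟩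
    · rw [Real.lt_log_iff_exp_lt (by nlinarith)]
      nlinarith
    · have h1 : (8 : ℝ) ^ (1 / δ) ≤ d + Real.exp (1 / δ₁) + (8 : ℝ) ^ (1 / δ) := by
        nlinarith
      have h2 : ((8 : ℝ) ^ (1 / δ)) ^ δ ≤ (d + Real.exp (1 / δ₁) + (8 : ℝ) ^ (1 / δ)) ^ δ :=
        Real.rpow_le_rpow (le_of_lt h8pos) h1 hδpos.le
      rwa [← Real.rpow_mul (by norm_num), one_div_mul_cancel hδpos.ne', Real.rpow_one] at h2
  have hc0 : 0 < c := lt_trans one_pos hc1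
  have hlogc_pos : 0 < Real.log c := lt_trans (by positivity) hlogc
  refine ⟨c, hc1, ?_⟩
  -- key pointwise fact: x ≤ c^x / log c
  have hkey : ∀ x : ℝ, x * Real.log c ≤ c ^ x := by
    intro x
    rw [Real.rpow_def_of_pos hc0]
    calc x * Real.log c = Real.log c * x := by ring
    _ ≤ Real.log c * x + 1 := by linarith
    _ ≤ Real.exp (Real.log c * x) := by
        have := Real.add_one_le_exp (Real.log c * x); linarith
  -- eventual bound on the first term
  have htend : Tendsto (fun y : ℝ => c ^ δ₁ * (d / c) ^ y) atTop (nhds 0) := by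
    have h0 : Tendsto (fun y : ℝ => (d / c) ^ y) atTop (nhds 0) := by
      apply tendsto_rpow_atTop_of_base_lt_one
      · have : 0 < d / c := by positivity
        linarith
      · rw [div_lt_one hc0]; exact hcd
    have := h0.const_mul (c ^ δ₁)
    simpa using this
  have hE3 : ∀ᶠ y : ℝ in atTop, c ^ δ₁ * (d / c) ^ y ≤ 1 / 4 :=
    htend.eventually_le_const (by norm_num)
  -- the main eventual bound
  have hmain : ∀ᶠ y : ℝ in atTop,
      (1 / c ^ y) * ∫ x in Ioc 0 y, b x y * c ^ x ≤ 3 / 4 := by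
    filter_upwards [hsmall, hlarge, hE3, eventually_ge_atTop (δ₁ + δ),
      eventually_ge_atTop (2 * δ)] with y hy_small hy_large hy3 hy1 hy2
    have hy0 : 0 < y := by linarith
    have hyd : δ₁ ≤ y - δ := by linarith
    have hydpos : 0 < y - δ := by linarith
    have hcy_pos : 0 < c ^ y := Real.rpow_pos_of_pos hc0 _
    by_cases hint : IntegrableOn (fun x => b x y * c ^ x) (Ioc 0 y) volume
    · -- integrable case
      have hb_meas : Measurable fun x => b x y :=
        hbmeas.comp (measurable_id.prodMk measurable_const)
      -- integrability of b x y * x on Ioc 0 y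
      have hbx_int : IntegrableOn (fun x => b x y * x) (Ioc 0 y) volume := by
        apply Integrable.mono (hint.const_mul (1 / Real.log c))
        · exact ((hb_meas.mul measurable_id).aestronglyMeasurable)
        · rw [ae_restrict_iff' measurableSet_Ioc]
          filter_upwards with x hx
          have hbx : 0 ≤ b x y := hbnonneg x y hx.1 hy0
          have hcx : 0 < c ^ x := Real.rpow_pos_of_pos hc0 _
          rw [Real.norm_eq_abs, Real.norm_eq_abs,
            abs_of_nonneg (mul_nonneg hbx hx.1.le),
            abs_of_nonneg (mul_nonneg (by positivity) (mul_nonneg hbx hcx.le))]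
          have h1 : x ≤ (1 / Real.log c) * c ^ x := by
            rw [div_mul_eq_mul_div, le_div_iff₀ hlogc_pos, mul_comm (1 : ℝ)]
            have := hkey x; nlinarith
          nlinarith
      -- integrability of b on Ioc 0 δ₁
      have hb_int_small : IntegrableOn (fun x => b x y) (Ioc 0 δ₁) volume := by
        apply Integrable.mono (hint.mono_set (Ioc_subset_Ioc_right (by linarith)))
        · exact hb_meas.aestronglyMeasurable
        · rw [ae_restrict_iff' measurableSet_Ioc]
          filter_upwards with x hx
          have hbx : 0 ≤ b x y := hbnonneg x y hx.1 hy0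
          have hcx : (1 : ℝ) ≤ c ^ x :=
            Real.one_le_rpow hc1.le (le_of_lt hx.1)
          rw [Real.norm_eq_abs, Real.norm_eq_abs, abs_of_nonneg hbx,
            abs_of_nonneg (by positivity)]
          nlinarith
      -- split the integral
      have hint1 : IntegrableOn (fun x => b x y * c ^ x) (Ioc 0 δ₁) volume :=
        hint.mono_set (Ioc_subset_Ioc_right (by linarith))
      have hint2 : IntegrableOn (fun x => b x y * c ^ x) (Ioc δ₁ (y - δ)) volume :=
        hint.mono_set (Ioc_subset_Ioc (le_of_lt hδ₁) (by linarith))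
      have hint3 : IntegrableOn (fun x => b x y * c ^ x) (Ioc (y - δ) y) volume :=
        hint.mono_set (Ioc_subset_Ioc (by linarith) le_rfl)
      have hsplit : ∫ x in Ioc 0 y, b x y * c ^ x
          = (∫ x in Ioc 0 δ₁, b x y * c ^ x) + (∫ x in Ioc δ₁ (y - δ), b x y * c ^ x)
            + ∫ x in Ioc (y - δ) y, b x y * c ^ x := by
        have hint0 : IntegrableOn (fun x => b x y * c ^ x) (Ioc 0 (y - δ)) volume :=
          hint.mono_set (Ioc_subset_Ioc_right (by linarith))
        have e1 : ∫ x in Ioc 0 y, b x y * c ^ x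
            = (∫ x in Ioc 0 (y - δ), b x y * c ^ x) + ∫ x in Ioc (y - δ) y, b x y * c ^ x := by
          rw [(Ioc_union_Ioc_eq_Ioc (show (0:ℝ) ≤ y - δ by linarith)
            (show y - δ ≤ y by linarith)).symm]
          exact setIntegral_union (Ioc_disjoint_Ioc_of_le le_rfl) measurableSet_Ioc hint0 hint3
        have e2 : ∫ x in Ioc 0 (y - δ), b x y * c ^ x
            = (∫ x in Ioc 0 δ₁, b x y * c ^ x) + ∫ x in Ioc δ₁ (y - δ), b x y * c ^ x := by
          rw [(Ioc_union_Ioc_eq_Ioc (show (0:ℝ) ≤ δ₁ by linarith) hyd).symm]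
          exact setIntegral_union (Ioc_disjoint_Ioc_of_le le_rfl) measurableSet_Ioc hint1 hint2
        rw [e1, e2]
      -- bound piece 1
      have hp1 : ∫ x in Ioc 0 δ₁, b x y * c ^ x ≤ (1 / 4) * c ^ y := by
        have step : ∫ x in Ioc 0 δ₁, b x y * c ^ x ≤ ∫ x in Ioc 0 δ₁, c ^ δ₁ * b x y := by
          apply setIntegral_mono_on hint1 (hb_int_small.const_mul _) measurableSet_Ioc
          intro x hx
          have hbx : 0 ≤ b x y := hbnonneg x y hx.1 hy0
          have hcx : c ^ x ≤ c ^ δ₁ :=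
            Real.rpow_le_rpow_of_exponent_le hc1.le hx.2
          nlinarith
        have step2 : ∫ x in Ioc 0 δ₁, c ^ δ₁ * b x y ≤ c ^ δ₁ * d ^ y := by
          rw [integral_const_mul]
          have hcp : (0:ℝ) < c ^ δ₁ := Real.rpow_pos_of_pos hc0 _
          exact mul_le_mul_of_nonneg_left hy_small hcp.le
        have step3 : c ^ δ₁ * d ^ y ≤ (1 / 4) * c ^ y := by
          have h4 : c ^ δ₁ * (d ^ y / c ^ y) ≤ 1 / 4 := by
            have := hy3; rwa [Real.div_rpow (by positivity) hc0.le] at this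
          calc c ^ δ₁ * d ^ y = c ^ δ₁ * (d ^ y / c ^ y * c ^ y) := by
                rw [div_mul_cancel₀ _ hcy_pos.ne']
          _ = (c ^ δ₁ * (d ^ y / c ^ y)) * c ^ y := by ring
          _ ≤ (1 / 4) * c ^ y := mul_le_mul_of_nonneg_right h4 hcy_pos.le
        linarith
      -- bound piece 2
      have hp2 : ∫ x in Ioc δ₁ (y - δ), b x y * c ^ x ≤ (1 / 4) * c ^ y := by
        set K : ℝ := c ^ (y - δ) / (y - δ) with hK
        have hKpos : 0 < K := by
          apply div_pos (Real.rpow_pos_of_pos hc0 _) hydpos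
        have step : ∫ x in Ioc δ₁ (y - δ), b x y * c ^ x
            ≤ ∫ x in Ioc δ₁ (y - δ), K * (b x y * x) := by
          apply setIntegral_mono_on hint2
            ((hbx_int.mono_set (Ioc_subset_Ioc (le_of_lt hδ₁) (by linarith))).const_mul _)
            measurableSet_Ioc
          intro x hx
          have hx0 : 0 < x := lt_trans hδ₁ hx.1
          have hbx : 0 ≤ b x y := hbnonneg x y hx0 hy0
          have hcx : c ^ x ≤ K * x := by
            rw [hK, div_mul_eq_mul_div, le_div_iff₀ hydpos]
            -- show c ^ x * (y - δ) ≤ c ^ (y - δ) * x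
            have hsub : c ^ (y - δ) = c ^ x * c ^ (y - δ - x) := by
              rw [← Real.rpow_add hc0]; ring_nf
            rw [hsub, mul_assoc]
            have hcx0 : 0 < c ^ x := Real.rpow_pos_of_pos hc0 _
            have h2 : y - δ ≤ c ^ (y - δ - x) * x := by
              have ht : 0 ≤ y - δ - x := by linarith [hx.2]
              have h3 : (y - δ - x) * Real.log c + 1 ≤ Real.exp (Real.log c * (y - δ - x)) := by
                have := Real.add_one_le_exp (Real.log c * (y - δ - x)); nlinarith
              have h4 : c ^ (y - δ - x) = Real.exp (Real.log c * (y - δ - x)) :=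
                Real.rpow_def_of_pos hc0 _
              rw [h4]
              have h5 : 1 / x ≤ Real.log c := by
                have : 1 / x ≤ 1 / δ₁ := by
                  apply one_div_le_one_div_of_le hδ₁ hx.1.le
                linarith
              have h6 : (y - δ) / x ≤ (y - δ - x) * Real.log c + 1 := by
                rw [div_le_iff₀ hx0]
                have : 1 ≤ x * Real.log c := by
                  have h := mul_le_mul_of_nonneg_left h5 hx0.le
                  rwa [mul_one_div, div_self hx0.ne'] at h
                nlinarith
              have h7 : (y - δ) / x ≤ Real.exp (Real.log c * (y - δ - x)) := le_trans h6 h3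
              calc y - δ = ((y - δ) / x) * x := by field_simp
              _ ≤ Real.exp (Real.log c * (y - δ - x)) * x := by nlinarith [Real.exp_pos (Real.log c * (y - δ - x))]
            nlinarith
          calc b x y * c ^ x ≤ b x y * (K * x) := by nlinarith
          _ = K * (b x y * x) := by ring
        have step2 : ∫ x in Ioc δ₁ (y - δ), K * (b x y * x) ≤ K * y := by
          rw [integral_const_mul]
          have hsub : ∫ x in Ioc δ₁ (y - δ), b x y * x ≤ ∫ x in Ioc 0 y, b x y * x := by
            apply setIntegral_mono_set hbx_int
            · rw [EventuallyLE, ae_restrict_iff' measurableSet_Ioc]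
              filter_upwards with x hx
              have := hbnonneg x y hx.1 hy0
              simp only [Pi.zero_apply]
              nlinarith [hx.1]
            · exact Filter.Eventually.of_forall (Ioc_subset_Ioc (le_of_lt hδ₁) (by linarith))
          have := hmass y hy0
          exact mul_le_mul_of_nonneg_left (le_trans hsub this) hKpos.le
        have step3 : K * y ≤ (1 / 4) * c ^ y := by
          have hyy : y / (y - δ) ≤ 2 := by
            rw [div_le_iff₀ hydpos]; linarith
          have hKy : K * y = c ^ (y - δ) * (y / (y - δ)) := by
            rw [hK]; field_simp
          have hcyd : c ^ (y - δ) ≤ c ^ y / 8 := by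
            have hsub : c ^ y = c ^ (y - δ) * c ^ δ := by
              rw [← Real.rpow_add hc0]; ring_nf
            have hcd0 : 0 < c ^ (y - δ) := Real.rpow_pos_of_pos hc0 _
            rw [le_div_iff₀ (by norm_num : (0:ℝ) < 8), hsub]
            nlinarith
          have hcyd0 : 0 < c ^ (y - δ) := Real.rpow_pos_of_pos hc0 _
          have hyy0 : 0 ≤ y / (y - δ) := by positivity
          calc K * y = c ^ (y - δ) * (y / (y - δ)) := hKy
          _ ≤ (c ^ y / 8) * 2 := by nlinarith
          _ = (1 / 4) * c ^ y := by ring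
        linarith
      -- bound piece 3
      have hp3 : ∫ x in Ioc (y - δ) y, b x y * c ^ x ≤ (1 / 4) * c ^ y := by
        have step : ∫ x in Ioc (y - δ) y, b x y * c ^ x
            ≤ ∫ _x in Ioc (y - δ) y, bm * c ^ y := by
          apply setIntegral_mono_on hint3 ((integrableOn_const_iff (C := bm * c ^ y)).mpr (Or.inr (by
            rw [Real.volume_Ioc]; exact ENNReal.ofReal_lt_top))) measurableSet_Ioc
          intro x hx
          have hx0 : 0 < x := by linarith [hx.1, hydpos]
          have hbx : 0 ≤ b x y := hbnonneg x y hx0 hy0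
          have hbub : b x y ≤ bm := hy_large x ⟨by linarith [hx.1], hx.2⟩
          have hcx : c ^ x ≤ c ^ y := Real.rpow_le_rpow_of_exponent_le hc1.le hx.2
          have hcx0 : 0 < c ^ x := Real.rpow_pos_of_pos hc0 _
          nlinarith
        have step2 : ∫ _x in Ioc (y - δ) y, bm * c ^ y = δ * (bm * c ^ y) := by
          rw [setIntegral_const, Real.volume_real_Ioc_of_le (by linarith), smul_eq_mul]
          ring_nf
        have step3 : δ * (bm * c ^ y) ≤ (1 / 4) * c ^ y := by nlinarith
        linarith [step, step2.le, step2.ge]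
      -- assemble
      rw [hsplit]
      rw [one_div, inv_mul_le_iff₀ hcy_pos]
      calc (∫ x in Ioc 0 δ₁, b x y * c ^ x) + (∫ x in Ioc δ₁ (y - δ), b x y * c ^ x)
            + ∫ x in Ioc (y - δ) y, b x y * c ^ x
          ≤ (1/4) * c ^ y + (1/4) * c ^ y + (1/4) * c ^ y := by linarith
      _ = c ^ y * (3 / 4) := by ring
    · -- non-integrable case: the integral is 0
      rw [integral_undef hint, mul_zero]
      norm_num
  -- conclude via limsup
  have hlimsup : limsup
      (fun y => (((1 / c ^ y) * ∫ x in Ioc 0 y, b x y * c ^ x : ℝ) : EReal)) atTop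
      ≤ ((3 / 4 : ℝ) : EReal) := by
    refine limsup_le_of_le (by isBoundedDefault) ?_
    filter_upwards [hmain] with y hy
    exact_mod_cast EReal.coe_le_coe_iff.mpr hy
  refine lt_of_le_of_lt hlimsup ?_
  have : ((3 / 4 : ℝ) : EReal) < ((1 : ℝ) : EReal) := by
    rw [EReal.coe_lt_coe_iff]; norm_num
  simpa using this
end

section
/- Define $b(x,y) = y$ for $x \in [0, 1/y] \cup [y - 1/y, y]$ and $b(x,y) = 0$ for $x \in (1/y, y - 1/y)$, when $y > \sqrt{2}$. Then for the weight $\omega(x) = e^x$, $\int_0^y b(x,y)\,e^x\,dx = y(e^{1/y}-1) + y e^y(1 - e^{-1/y})$, and $\frac{1}{e^y}\int_0^y b(x,y)\,e^x\,dx \to 1$ as $y \to \infty$; in particular $\limsup_{y\to\infty}\frac{1}{e^y}\int_0^y b(x,y)\,e^x\,dx = 1$, so the strict inequality $< 1$ fails for $\omega(x)=e^x$. -/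
open MeasureTheory Set Filter Real

theorem shattering_type_kernel_exponential_weight
    (b : ℝ → ℝ → ℝ)
    (hb : ∀ y > Real.sqrt 2, ∀ x ∈ Icc (0:ℝ) y,
      b x y = if x ≤ 1 / y ∨ y - 1 / y ≤ x then y else 0) :
    (∀ y > Real.sqrt 2,
      ∫ x in Ioc 0 y, b x y * exp x
        = y * (exp (1 / y) - 1) + y * exp y * (1 - exp (-(1 / y)))) ∧
    Tendsto (fun y => (1 / exp y) * ∫ x in Ioc 0 y, b x y * exp x) atTop (nhds 1) ∧
    limsup (fun y => (1 / exp y) * ∫ x in Ioc 0 y, b x y * exp x) atTop = 1 := by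
  have hs2 : (1:ℝ) < Real.sqrt 2 := by
    have : Real.sqrt 1 < Real.sqrt 2 := Real.sqrt_lt_sqrt (by norm_num) (by norm_num)
    simpa using this
  have key : ∀ y, Real.sqrt 2 < y →
      ∫ x in Ioc 0 y, b x y * exp x
        = y * (exp (1 / y) - 1) + y * exp y * (1 - exp (-(1 / y))) := by
    intro y hy
    have hy1 : (1:ℝ) < y := lt_trans hs2 hy
    have hy0 : (0:ℝ) < y := by linarith
    have hinv : 0 < 1 / y := by positivity
    have h2y : 2 < y ^ 2 := (Real.sqrt_lt' hy0).mp hy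
    have hmid : 1 / y < y - 1 / y := by
      have h2 : 2 / y < y := by rw [div_lt_iff₀ hy0]; nlinarith
      have : 1 / y + 1 / y = 2 / y := by ring
      linarith
    have hpos : 0 < y - 1 / y := lt_trans hinv hmid
    have hle : 1 / y ≤ y := by linarith
    set S : Set ℝ := Iic (1 / y) ∪ Ici (y - 1 / y) with hS
    have hSm : MeasurableSet S := measurableSet_Iic.union measurableSet_Ici
    have hcong : EqOn (fun x => b x y * exp x)
        (fun x => S.indicator (fun x => y * exp x) x) (Ioc 0 y) := by
      intro x hx
      have hx' : x ∈ Icc (0:ℝ) y := Ioc_subset_Icc_self hx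
      have hbx := hb y hy x hx'
      simp only [Set.indicator_apply, hS, mem_union, mem_Iic, mem_Ici]
      rw [hbx]
      split_ifs with h
      · ring
      · ring
    rw [setIntegral_congr_fun measurableSet_Ioc hcong]
    rw [setIntegral_indicator hSm]
    have hinter : S ∩ Ioc 0 y = Ioc 0 (1 / y) ∪ Icc (y - 1 / y) y := by
      ext x
      simp only [hS, mem_inter_iff, mem_union, mem_Iic, mem_Ici, mem_Ioc, mem_Icc]
      constructor
      · rintro ⟨h1 | h2, h3, h4⟩
        · exact Or.inl ⟨h3, h1⟩
        · exact Or.inr ⟨h2, h4⟩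
      · rintro (⟨h3, h4⟩ | ⟨h1, h2⟩)
        · exact ⟨Or.inl h4, h3, le_trans h4 hle⟩
        · exact ⟨Or.inr h1, lt_of_lt_of_le hpos h1, h2⟩
    rw [Set.inter_comm, hinter]
    have hdisj : Disjoint (Ioc (0:ℝ) (1 / y)) (Icc (y - 1 / y) y) := by
      apply Set.disjoint_left.mpr
      rintro x ⟨_, hx2⟩ ⟨hx3, _⟩
      linarith
    have hcont : Continuous fun x : ℝ => y * exp x := continuous_const.mul Real.continuous_exp
    rw [setIntegral_union hdisj measurableSet_Icc
      (hcont.integrableOn_Ioc) (hcont.integrableOn_Icc)]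
    have h1 : ∫ x in Ioc (0:ℝ) (1 / y), y * exp x = y * (exp (1 / y) - 1) := by
      rw [← intervalIntegral.integral_of_le hinv.le, intervalIntegral.integral_const_mul,
        _root_.integral_exp]
      simp [Real.exp_zero]
    have h2 : ∫ x in Icc (y - 1 / y) y, y * exp x = y * exp y * (1 - exp (-(1 / y))) := by
      rw [integral_Icc_eq_integral_Ioc, ← intervalIntegral.integral_of_le (by linarith),
        intervalIntegral.integral_const_mul, _root_.integral_exp]
      rw [show y - 1 / y = y + (-(1 / y)) by ring, Real.exp_add]
      ring
    rw [h1, h2]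
  have hslope : Tendsto (fun t : ℝ => (Real.exp t - 1) / t) (nhdsWithin 0 {(0:ℝ)}ᶜ) (nhds 1) := by
    have h := Real.hasDerivAt_exp 0
    have h2 := hasDerivAt_iff_tendsto_slope.mp h
    simp only [Real.exp_zero] at h2
    refine h2.congr ?_
    intro x
    simp [slope_def_field, div_eq_inv_mul]
  have hto0 : Tendsto (fun y : ℝ => 1 / y) atTop (nhdsWithin 0 {(0:ℝ)}ᶜ) := by
    rw [tendsto_nhdsWithin_iff]
    constructor
    · simpa [one_div] using tendsto_inv_atTop_zero
    · filter_upwards [eventually_gt_atTop (0:ℝ)] with y hy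
      simp [mem_compl_iff]
      positivity
  have hto0' : Tendsto (fun y : ℝ => -(1 / y)) atTop (nhdsWithin 0 {(0:ℝ)}ᶜ) := by
    rw [tendsto_nhdsWithin_iff]
    constructor
    · have : Tendsto (fun y : ℝ => 1 / y) atTop (nhds 0) := by
        simpa [one_div] using tendsto_inv_atTop_zero
      simpa using this.neg
    · filter_upwards [eventually_gt_atTop (0:ℝ)] with y hy
      simp [mem_compl_iff]
      positivity
  have hA : Tendsto (fun y : ℝ => y * (exp (1 / y) - 1)) atTop (nhds 1) := by
    have := hslope.comp hto0
    refine this.congr' ?_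
    filter_upwards [eventually_gt_atTop (0:ℝ)] with y hy
    have hyne : y ≠ 0 := ne_of_gt hy
    simp only [Function.comp_apply]
    rw [div_eq_mul_inv, one_div, inv_inv]
    ring
  have hB : Tendsto (fun y : ℝ => y * (1 - exp (-(1 / y)))) atTop (nhds 1) := by
    have := hslope.comp hto0'
    refine this.congr' ?_
    filter_upwards [eventually_gt_atTop (0:ℝ)] with y hy
    have hyne : y ≠ 0 := ne_of_gt hy
    simp only [Function.comp_apply]
    field_simp
    ring
  have hexpinv : Tendsto (fun y : ℝ => 1 / exp y) atTop (nhds 0) := by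
    exact (tendsto_inv_atTop_zero.comp Real.tendsto_exp_atTop).congr (fun y => by simp [one_div])
  have hC : Tendsto (fun y : ℝ => y * (exp (1 / y) - 1) * (1 / exp y)) atTop (nhds 0) := by
    simpa using hA.mul hexpinv
  have hG : Tendsto (fun y : ℝ => y * (exp (1 / y) - 1) * (1 / exp y)
      + y * (1 - exp (-(1 / y)))) atTop (nhds 1) := by
    simpa using hC.add hB
  have htend : Tendsto (fun y => (1 / exp y) * ∫ x in Ioc 0 y, b x y * exp x) atTop (nhds 1) := by
    refine hG.congr' ?_
    filter_upwards [eventually_gt_atTop (Real.sqrt 2)] with y hy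
    rw [key y hy]
    have hey : Real.exp y ≠ 0 := (Real.exp_pos y).ne'
    field_simp
  exact ⟨key, htend, htend.limsup_eq⟩
end

section
/- With $b(x,y) = y$ for $x \in [0,1/y] \cup [y-1/y, y]$ and $b(x,y)=0$ otherwise (for $y > \sqrt{2}$), and the weight $\omega(x) = x e^{x^2}$: $\frac{1}{\omega(y)}\int_0^y b(x,y)\,\omega(x)\,dx = \frac{1}{2} e^{-y^2}\bigl(e^{1/y^2} - 1 + e^{y^2} - e^{(y-1/y)^2}\bigr) \to \frac{1 - e^{-2}}{2} < 1$ as $y \to \infty$. -/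
open MeasureTheory Set Filter Real

lemma int_xexp (a b : ℝ) :
    ∫ x in a..b, x * Real.exp (x ^ 2) = Real.exp (b ^ 2) / 2 - Real.exp (a ^ 2) / 2 := by
  have hd : ∀ x : ℝ, HasDerivAt (fun t : ℝ => Real.exp (t ^ 2) / 2) (x * Real.exp (x ^ 2)) x := by
    intro x
    have h1 : HasDerivAt (fun t : ℝ => t ^ 2) (2 * x) x := by
      simpa using hasDerivAt_pow 2 x
    have := h1.exp.div_const 2
    refine this.congr_deriv ?_
    ring
  rw [intervalIntegral.integral_eq_sub_of_hasDerivAt (fun x _ => hd x)]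
  exact (continuous_id.mul (Real.continuous_exp.comp (continuous_pow 2))).intervalIntegrable _ _

lemma main_id (b : ℝ → ℝ → ℝ)
    (hb : ∀ y > Real.sqrt 2, ∀ x ∈ Icc (0:ℝ) y,
      b x y = if x ≤ 1 / y ∨ y - 1 / y ≤ x then y else 0)
    (y : ℝ) (hy : Real.sqrt 2 < y) :
    (1 / (y * exp (y ^ 2))) * ∫ x in Ioc 0 y, b x y * (x * exp (x ^ 2))
      = (1 / 2) * exp (-(y ^ 2)) *
          (exp (1 / y ^ 2) - 1 + exp (y ^ 2) - exp ((y - 1 / y) ^ 2)) := by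
  have h2 : (0:ℝ) < Real.sqrt 2 := by positivity
  have hy0 : 0 < y := h2.trans hy
  have hy2 : 2 < y ^ 2 := by
    have := Real.sq_sqrt (by norm_num : (2:ℝ) ≥ 0)
    nlinarith [Real.sqrt_nonneg 2]
  have hinv : 0 < 1 / y := by positivity
  have hlt : 1 / y < y - 1 / y := by
    rw [div_lt_iff₀ hy0, sub_mul, div_mul_cancel₀ _ hy0.ne']
    nlinarith
  set g : ℝ → ℝ := fun x => (if x ≤ 1 / y ∨ y - 1 / y ≤ x then y else 0) * (x * exp (x ^ 2))
    with hg
  have hgind : g = Set.indicator ({x | x ≤ 1 / y} ∪ {x | y - 1 / y ≤ x})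
      (fun x => y * (x * exp (x ^ 2))) := by
    funext x
    by_cases h : x ≤ 1 / y ∨ y - 1 / y ≤ x <;>
      simp [hg, Set.indicator, h, Set.mem_union]
  have hmeas : MeasurableSet ({x : ℝ | x ≤ 1 / y} ∪ {x | y - 1 / y ≤ x}) :=
    (measurableSet_Iic).union (measurableSet_Ici)
  have hgint : ∀ a c : ℝ, IntervalIntegrable g volume a c := by
    intro a c
    rw [hgind]
    rw [intervalIntegrable_iff] at *
    exact (((continuous_const.mul (continuous_id.mul
      (Real.continuous_exp.comp (continuous_pow 2)))).integrableOn_uIoc (a := a) (b := c))).indicator hmeas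
  have hcongr : ∫ x in Ioc 0 y, b x y * (x * exp (x ^ 2)) = ∫ x in Ioc 0 y, g x := by
    apply setIntegral_congr_fun measurableSet_Ioc
    intro x hx
    have := hb y hy x ⟨hx.1.le, hx.2⟩
    simp only [hg, this]
  have hIoc : ∫ x in Ioc 0 y, g x = ∫ x in (0:ℝ)..y, g x :=
    (intervalIntegral.integral_of_le hy0.le).symm
  have hsplit : ∫ x in (0:ℝ)..y, g x =
      (∫ x in (0:ℝ)..(1/y), g x) + (∫ x in (1/y)..(y - 1/y), g x)
        + (∫ x in (y - 1/y)..y, g x) := by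
    rw [intervalIntegral.integral_add_adjacent_intervals (hgint _ _) (hgint _ _),
      intervalIntegral.integral_add_adjacent_intervals (hgint _ _) (hgint _ _)]
  have h1 : ∫ x in (0:ℝ)..(1/y), g x = y * (exp ((1/y) ^ 2) / 2 - exp ((0:ℝ) ^ 2) / 2) := by
    rw [show ∫ x in (0:ℝ)..(1/y), g x = ∫ x in (0:ℝ)..(1/y), y * (x * exp (x ^ 2)) from
      intervalIntegral.integral_congr (fun x hx => by
        rw [uIcc_of_le hinv.le] at hx
        simp only [hg]
        rw [if_pos (Or.inl hx.2)]),
      intervalIntegral.integral_const_mul, int_xexp]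
  have hmid : ∫ x in (1/y)..(y - 1/y), g x = 0 := by
    rw [intervalIntegral.integral_of_le hlt.le, MeasureTheory.integral_Ioc_eq_integral_Ioo]
    apply setIntegral_eq_zero_of_forall_eq_zero
    intro x hx
    simp only [hg]
    rw [if_neg]
    · ring
    · push_neg
      exact ⟨hx.1, hx.2⟩
  have h3 : ∫ x in (y - 1/y)..y, g x = y * (exp (y ^ 2) / 2 - exp ((y - 1/y) ^ 2) / 2) := by
    rw [show ∫ x in (y - 1/y)..y, g x = ∫ x in (y - 1/y)..y, y * (x * exp (x ^ 2)) from
      intervalIntegral.integral_congr (fun x hx => by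
        rw [uIcc_of_le (by linarith : y - 1/y ≤ y)] at hx
        simp only [hg]
        rw [if_pos (Or.inr hx.1)]),
      intervalIntegral.integral_const_mul, int_xexp]
  rw [hcongr, hIoc, hsplit, h1, hmid, h3]
  have hE : exp (y ^ 2) ≠ 0 := (Real.exp_pos _).ne'
  have hne : y ≠ 0 := hy0.ne'
  rw [Real.exp_neg]
  rw [show ((1:ℝ)/y) ^ 2 = 1 / y ^ 2 by rw [div_pow, one_pow],
    show ((0:ℝ)) ^ 2 = 0 by norm_num, Real.exp_zero]
  field_simp
  ring

theorem shattering_type_kernel_superexponential_weight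
    (b : ℝ → ℝ → ℝ)
    (hb : ∀ y > Real.sqrt 2, ∀ x ∈ Icc (0:ℝ) y,
      b x y = if x ≤ 1 / y ∨ y - 1 / y ≤ x then y else 0) :
    (∀ y > Real.sqrt 2,
      (1 / (y * exp (y ^ 2))) * ∫ x in Ioc 0 y, b x y * (x * exp (x ^ 2))
        = (1 / 2) * exp (-(y ^ 2)) *
            (exp (1 / y ^ 2) - 1 + exp (y ^ 2) - exp ((y - 1 / y) ^ 2))) ∧
    Tendsto (fun y => (1 / (y * exp (y ^ 2))) *
        ∫ x in Ioc 0 y, b x y * (x * exp (x ^ 2))) atTop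
      (nhds ((1 - exp (-2)) / 2)) ∧
    (1 - exp (-2)) / 2 < 1 := by
  refine ⟨fun y hy => main_id b hb y hy, ?_, ?_⟩
  · have hlim : Tendsto (fun y : ℝ =>
        (1/2) * (exp (1 / y ^ 2 - y ^ 2) - exp (-(y ^ 2)) + 1 - exp (1 / y ^ 2 - 2)))
        atTop (nhds ((1 - exp (-2)) / 2)) := by
      have hsq : Tendsto (fun y : ℝ => y ^ 2) atTop atTop :=
        tendsto_pow_atTop (by norm_num)
      have hinv : Tendsto (fun y : ℝ => 1 / y ^ 2) atTop (nhds 0) := by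
        simpa [one_div, Function.comp_def] using tendsto_inv_atTop_zero.comp hsq
      have hneg : Tendsto (fun y : ℝ => -(y ^ 2)) atTop atBot :=
        tendsto_neg_atTop_atBot.comp hsq
      have t1 : Tendsto (fun y : ℝ => exp (1 / y ^ 2 - y ^ 2)) atTop (nhds 0) := by
        refine Real.tendsto_exp_atBot.comp ?_
        simpa [sub_eq_add_neg] using hinv.add_atBot hneg
      have t2 : Tendsto (fun y : ℝ => exp (-(y ^ 2))) atTop (nhds 0) :=
        Real.tendsto_exp_atBot.comp hneg
      have t3 : Tendsto (fun y : ℝ => exp (1 / y ^ 2 - 2)) atTop (nhds (exp (-2))) := by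
        have : Tendsto (fun y : ℝ => 1 / y ^ 2 - 2) atTop (nhds (0 - 2)) :=
          hinv.sub_const 2
        simpa [Function.comp_def] using (Real.continuous_exp.continuousAt).tendsto.comp this
      have := (((t1.sub t2).add_const 1).sub t3).const_mul (1/2 : ℝ)
      convert this using 2
      ring
    apply hlim.congr'
    filter_upwards [eventually_gt_atTop (Real.sqrt 2)] with y hy
    have h2 : (0:ℝ) < Real.sqrt 2 := by positivity
    have hy0 : 0 < y := h2.trans hy
    rw [main_id b hb y hy]
    have hexp : (y - 1/y) ^ 2 = y ^ 2 - 2 + 1 / y ^ 2 := by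
      field_simp
      ring
    have e1 : exp (1 / y ^ 2 - y ^ 2) = exp (1 / y ^ 2) / exp (y ^ 2) := Real.exp_sub _ _
    have e2 : exp (1 / y ^ 2 - 2) = exp (1 / y ^ 2) * exp (-2) := by
      rw [← Real.exp_add]; ring_nf
    have e3 : exp (y ^ 2 - 2 + 1 / y ^ 2) = exp (y ^ 2) * (exp (1 / y ^ 2) * exp (-2)) := by
      rw [← Real.exp_add, ← Real.exp_add]; ring_nf
    rw [hexp, e1, e2, e3, Real.exp_neg]
    have hE : exp (y ^ 2) ≠ 0 := (Real.exp_pos _).ne'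
    field_simp
  · have := Real.exp_pos (-2 : ℝ)
    linarith
end
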